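/- Let G: H → H be Lipschitz continuous with constant L_G < 1 and let z* be its unique fixed point. Let c ≥ κ > 0 with c ≤ ς. If G = J_{cT} for a maximal monotone T (so z* is the unique zero of T), then for any z ∈ H with z̃ := J_{cT}(z): ‖z̃ − z*‖² ≤ ((2L_G − L_G²)/(1−L_G)²)·ς²·‖c^{-1}(z − z̃)‖². -/

import Mathlib

/-!
Monotonicity of `T` makes the resolvent `G = J_{cT}` firmly nonexpansive, so with `z̃ = G z`,
`‖z̃ - z*‖² + ‖z - z̃‖² ≤ ‖z - z*‖²`. The contraction property bounds the distance to the fixed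
point by the residual, `(1 - L_G)‖z - z*‖ ≤ ‖z - z̃‖`. Eliminating `‖z - z*‖` gives
`‖z̃ - z*‖² ≤ ((1 - L_G)⁻² - 1)‖z - z̃‖²`, and `c ≤ ς` turns `‖z - z̃‖` into `ς‖c⁻¹(z - z̃)‖`.
-/

open RealInnerProductSpace

section Resolvent

variable {H : Type*} [NormedAddCommGroup H] [InnerProductSpace ℝ H]

theorem norm_sq_add_norm_sq_le_of_inner_nonneg {x y : H} (h : 0 ≤ ⟪x, y⟫) :
    ‖x‖ ^ 2 + ‖y‖ ^ 2 ≤ ‖x + y‖ ^ 2 := by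
  rw [norm_add_sq_real]
  linarith

variable {T : H → Set H} {c : ℝ} {G : H → H}

theorem inner_resolvent_sub_nonneg
    (hmono : ∀ z z' w w', w ∈ T z → w' ∈ T z' → 0 ≤ ⟪z - z', w - w'⟫)
    (hc : 0 < c) (hG : ∀ z, c⁻¹ • (z - G z) ∈ T (G z)) (z z' : H) :
    0 ≤ ⟪G z - G z', (z - G z) - (z' - G z')⟫ := by
  have h := hmono _ _ _ _ (hG z) (hG z')
  rw [← smul_sub, real_inner_smul_right] at h
  exact nonneg_of_mul_nonneg_right h (inv_pos.mpr hc)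

theorem resolvent_firmly_nonexpansive
    (hmono : ∀ z z' w w', w ∈ T z → w' ∈ T z' → 0 ≤ ⟪z - z', w - w'⟫)
    (hc : 0 < c) (hG : ∀ z, c⁻¹ • (z - G z) ∈ T (G z)) (z z' : H) :
    ‖G z - G z'‖ ^ 2 + ‖(z - G z) - (z' - G z')‖ ^ 2 ≤ ‖z - z'‖ ^ 2 := by
  have h := norm_sq_add_norm_sq_le_of_inner_nonneg (inner_resolvent_sub_nonneg hmono hc hG z z')
  rwa [show G z - G z' + (z - G z - (z' - G z')) = z - z' by abel] at h

end Resolvent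

theorem one_sub_mul_norm_sub_le_norm_sub {E : Type*} [SeminormedAddCommGroup E] {x y p : E}
    {L : ℝ} (h : ‖y - p‖ ≤ L * ‖x - p‖) : (1 - L) * ‖x - p‖ ≤ ‖x - y‖ := by
  have := norm_sub_le_norm_sub_add_norm_sub x y p
  linarith

theorem norm_le_mul_norm_inv_smul {E : Type*} [SeminormedAddCommGroup E] [NormedSpace ℝ E]
    {c ς : ℝ} (hc : 0 < c) (hcς : c ≤ ς) (v : E) : ‖v‖ ≤ ς * ‖c⁻¹ • v‖ := by
  rw [norm_smul, Real.norm_of_nonneg (inv_nonneg.mpr hc.le), ← mul_assoc, ← div_eq_mul_inv]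
  exact le_mul_of_one_le_left (norm_nonneg v) ((one_le_div hc).mpr hcς)

theorem sq_le_of_sq_add_sq_le_of_one_sub_mul_le {a b d L : ℝ} (hL : L < 1) (hd : 0 ≤ d)
    (hpyth : a ^ 2 + b ^ 2 ≤ d ^ 2) (hgap : (1 - L) * d ≤ b) :
    a ^ 2 ≤ (2 * L - L ^ 2) / (1 - L) ^ 2 * b ^ 2 := by
  have hL' : 0 < (1 - L) ^ 2 := by nlinarith
  have hd2 : ((1 - L) * d) ^ 2 ≤ b ^ 2 :=
    pow_le_pow_left₀ (mul_nonneg (by linarith) hd) hgap 2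
  rw [div_mul_eq_mul_div, le_div_iff₀ hL']
  nlinarith

theorem inv_lipschitz_of_resolvent_contraction_general
    {H : Type*} [NormedAddCommGroup H] [InnerProductSpace ℝ H]
    (T : H → Set H)
    (hmono : ∀ z z' w w', w ∈ T z → w' ∈ T z' → 0 ≤ (inner ℝ (z - z') (w - w') : ℝ))
    (c κ ς : ℝ) (hκ : 0 < κ) (hcκ : κ ≤ c) (hcς : c ≤ ς)
    (G : H → H) (hG : ∀ z, c⁻¹ • (z - G z) ∈ T (G z))
    (L_G : ℝ) (hL0 : 0 ≤ L_G) (hL1 : L_G < 1)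
    (hlip : ∀ z z', ‖G z - G z'‖ ≤ L_G * ‖z - z'‖)
    (zstar : H) (hfix : G zstar = zstar) :
    ∀ z : H, ‖G z - zstar‖ ^ 2 ≤
      (2 * L_G - L_G ^ 2) / (1 - L_G) ^ 2 * ς ^ 2 * ‖c⁻¹ • (z - G z)‖ ^ 2 := by
  intro z
  have hc : 0 < c := hκ.trans_le hcκ
  have hpyth : ‖G z - zstar‖ ^ 2 + ‖z - G z‖ ^ 2 ≤ ‖z - zstar‖ ^ 2 := by
    simpa [hfix] using resolvent_firmly_nonexpansive hmono hc hG z zstar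
  have hgap : (1 - L_G) * ‖z - zstar‖ ≤ ‖z - G z‖ :=
    one_sub_mul_norm_sub_le_norm_sub (by simpa [hfix] using hlip z zstar)
  have hcoeff : 0 ≤ (2 * L_G - L_G ^ 2) / (1 - L_G) ^ 2 := by
    apply div_nonneg <;> nlinarith
  calc ‖G z - zstar‖ ^ 2
      ≤ (2 * L_G - L_G ^ 2) / (1 - L_G) ^ 2 * ‖z - G z‖ ^ 2 :=
        sq_le_of_sq_add_sq_le_of_one_sub_mul_le hL1 (norm_nonneg _) hpyth hgap
    _ ≤ (2 * L_G - L_G ^ 2) / (1 - L_G) ^ 2 * (ς * ‖c⁻¹ • (z - G z)‖) ^ 2 := by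
        gcongr
        exact norm_le_mul_norm_inv_smul hc hcς _
    _ = (2 * L_G - L_G ^ 2) / (1 - L_G) ^ 2 * ς ^ 2 * ‖c⁻¹ • (z - G z)‖ ^ 2 := by ring

/-- If the resolvent G = J_{cT} is L_G-Lipschitz with L_G < 1 and fixed point z*, then T⁻¹ is
Lipschitz at the shadow sequence: ‖z̃ - z*‖² ≤ ((2L_G - L_G²)/(1-L_G)²)·ς²·‖c⁻¹(z - z̃)‖². -/
theorem inv_lipschitz_of_resolvent_contraction
    {H : Type*} [NormedAddCommGroup H] [InnerProductSpace ℝ H]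
    (T : H → Set H)
    (hmono : ∀ z z' w w', w ∈ T z → w' ∈ T z' → 0 ≤ (inner ℝ (z - z') (w - w') : ℝ))
    (hmax : ∀ z w, (∀ z' w', w' ∈ T z' → 0 ≤ (inner ℝ (z - z') (w - w') : ℝ)) → w ∈ T z)
    (c κ ς : ℝ) (hκ : 0 < κ) (hcκ : κ ≤ c) (hcς : c ≤ ς)
    (G : H → H) (hG : ∀ z, c⁻¹ • (z - G z) ∈ T (G z))
    (L_G : ℝ) (hL0 : 0 ≤ L_G) (hL1 : L_G < 1)
    (hlip : ∀ z z', ‖G z - G z'‖ ≤ L_G * ‖z - z'‖)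
    (zstar : H) (hfix : G zstar = zstar)
    (huniq : ∀ z, G z = z → z = zstar) :
    ∀ z : H, ‖G z - zstar‖ ^ 2 ≤
      (2 * L_G - L_G ^ 2) / (1 - L_G) ^ 2 * ς ^ 2 * ‖c⁻¹ • (z - G z)‖ ^ 2 :=
  inv_lipschitz_of_resolvent_contraction_general T hmono c κ ς hκ hcκ hcς G hG L_G hL0 hL1 hlip
    zstar hfix
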